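/- arXiv:2008.09414 — 3 statements merged into one kernel-verified Lean document; each statement's English description precedes it below -/
import Mathlib

section
/- For every real ε > 0, every weighted graph G = (V,E,ω) that admits a 1-page book-embedding (i.e., every weighted outerplanar graph) admits a two-dimensional book-embedding whose area is at most Σ_{e∈E} ω(e) + ε. -/
namespace Schematic

/-- A 1-page book-embedding of `G`: vertices are linearly ordered via an injective
real-valued placement `f`, and no two edges cross. -/
def IsBE {V : Type*} (G : SimpleGraph V) (f : V → ℝ) : Prop :=
  Function.Injective f ∧
  ∀ a b c d : V, G.Adj a b → G.Adj c d → ¬ (f a < f c ∧ f c < f b ∧ f b < f d)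

/-- Edge `(u,v)` wraps around edge `(w,z)` (equivalently, `(w,z)` is nested into `(u,v)`),
where `(w,z)` is written in increasing order. -/
def Wraps {V : Type*} (G : SimpleGraph V) (f : V → ℝ) (u v w z : V) : Prop :=
  G.Adj u v ∧ G.Adj w z ∧ s(u, v) ≠ s(w, z) ∧
  f u ≤ f w ∧ f w < f z ∧ f z ≤ f v

/-- A two-dimensional book-embedding of a weighted graph: a supporting 1-page
book-embedding given by the x-coordinates `x`, and for each edge `(u,v)` with `u ≺ v`
a rectangle `[x u, x v] × [ylo u v, yhi u v]` with `ylo u v ≥ 0`, area equal to the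
weight of the edge, and `ylo u v` equal to the maximum of `yhi` over the edges nested
into `(u,v)` (`0` if there is no such edge). -/
def IsTwoDimBE {V : Type*} (G : SimpleGraph V) (ω : V → V → ℝ)
    (x : V → ℝ) (ylo yhi : V → V → ℝ) : Prop :=
  IsBE G x ∧
  (∀ u v : V, ylo u v = ylo v u) ∧
  (∀ u v : V, yhi u v = yhi v u) ∧
  (∀ u v : V, G.Adj u v → 0 ≤ ylo u v) ∧
  (∀ u v : V, G.Adj u v → x u < x v →
    (x v - x u) * (yhi u v - ylo u v) = ω u v) ∧
  (∀ u v : V, G.Adj u v → x u < x v →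
    (∀ w z : V, Wraps G x u v w z → yhi w z ≤ ylo u v) ∧
    ((∃ w z : V, Wraps G x u v w z ∧ ylo u v = yhi w z) ∨
     ((¬ ∃ w z : V, Wraps G x u v w z) ∧ ylo u v = 0)))

open Classical in
/-- The sum of the weights of all edges of `G` (each unordered edge counted once,
in its `f`-increasing orientation). -/
noncomputable def totalWeight {V : Type*} [Fintype V] (G : SimpleGraph V)
    (ω : V → V → ℝ) (f : V → ℝ) : ℝ :=
  ∑ p : V × V, if G.Adj p.1 p.2 ∧ f p.1 < f p.2 then ω p.1 p.2 else 0

/-!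
Fix a non-crossing vertex order. An edge spans a set of gaps between consecutive vertices, and
these sets form a laminar family. Once the gap lengths are chosen, an edge of width `w` gets a
rectangle of height `ω / w`, and stacking the rectangles on top of the edges nested into them,
the drawing is as high as the largest sum of heights along a chain of nested edges. Gap lengths
of total at most `1` making every such chain sum at most `∑ ω + ε` are found by induction on
the laminar family: an edge `e` spanning the most gaps splits the others into those under `e`
and those beside it, and the two recursive solutions are rescaled so that `e` gets width
proportional to `ω e` plus (slightly more than) the weight under it. The bounding box
`[0, 1] × [0, ∑ ω + ε]` then has the required area.
-/

open Finset NNReal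

section Laminar

variable {ι α : Type*}

def IsLaminar (S : ι → Finset α) (F : Finset ι) : Prop :=
  ∀ i ∈ F, ∀ j ∈ F, S i ⊆ S j ∨ S j ⊆ S i ∨ Disjoint (S i) (S j)

theorem IsLaminar.subset {S : ι → Finset α} {F F' : Finset ι} (hF : IsLaminar S F)
    (h : F' ⊆ F) : IsLaminar S F' :=
  fun i hi j hj => hF i (h hi) j (h hj)

/-- `g a` is the length of the gap `a`. Then `ω i / ∑ a ∈ S i, g a` is the height of a
rectangle of area `ω i` spanning the gaps `S i`, and a chain is a stack of such rectangles. -/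
def IsChainBounded (S : ι → Finset α) (ω : ι → ℝ) (F : Finset ι) (δ : ℝ) (g : α → ℝ) :
    Prop :=
  ∀ C ⊆ F, IsChain (fun i j => S i ⊆ S j) (C : Set ι) → ∑ i ∈ C, ω i / ∑ a ∈ S i, g a ≤ δ

theorem forall_subset_or_forall_disjoint_of_isChain {S : ι → Finset α} {C : Set ι}
    {T : Finset α} (hC : IsChain (fun i j => S i ⊆ S j) C) (hS : ∀ i ∈ C, (S i).Nonempty)
    (hT : ∀ i ∈ C, S i ⊆ T ∨ Disjoint (S i) T) :
    (∀ i ∈ C, S i ⊆ T) ∨ ∀ i ∈ C, Disjoint (S i) T := by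
  by_contra! h
  obtain ⟨⟨i, hi, hiT⟩, j, hj, hjT⟩ := h
  have hi' : Disjoint (S i) T := (hT i hi).resolve_left hiT
  have hj' : S j ⊆ T := (hT j hj).resolve_right hjT
  have hij : i ≠ j := by rintro rfl; exact hiT hj'
  rcases hC hi hj hij with h | h
  · obtain ⟨a, ha⟩ := hS i hi
    exact disjoint_left.1 hi' ha (hj' (h ha))
  · obtain ⟨a, ha⟩ := hS j hj
    exact disjoint_left.1 hi' (h ha) (hj' ha)

theorem sum_div_le_sum_div_div {s : Finset ι} {ω w w' : ι → ℝ} {c : ℝ} (hc : 0 < c)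
    (hω : ∀ i ∈ s, 0 ≤ ω i) (hw' : ∀ i ∈ s, 0 < w' i) (hw : ∀ i ∈ s, c * w' i ≤ w i) :
    ∑ i ∈ s, ω i / w i ≤ (∑ i ∈ s, ω i / w' i) / c := by
  rw [sum_div]
  refine sum_le_sum fun i hi => ?_
  rw [div_div, mul_comm]
  exact div_le_div_of_nonneg_left (hω i hi) (mul_pos hc (hw' i hi)) (hw i hi)

/-- A chain lies entirely under `e` or entirely beside it; scaling the gap lengths under `e`
by at least `a` and the others by at least `b` turns the bounds `δ₁` (for the chains under `e`
without `e` itself) and `δ₂` into `δ`. -/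
theorem isChainBounded_of_split [DecidableEq ι] [DecidableEq α] {S : ι → Finset α}
    {ω : ι → ℝ} {F : Finset ι} {e : ι} (he : e ∈ F)
    (hsplit : ∀ j ∈ F, S j ⊆ S e ∨ Disjoint (S j) (S e)) (hS : ∀ i ∈ F, (S i).Nonempty)
    (hω : ∀ i ∈ F, 0 ≤ ω i) {g g₁ g₂ : α → ℝ} (hg : ∀ q, 0 < g q) (hg₁ : ∀ q, 0 < g₁ q)
    (hg₂ : ∀ q, 0 < g₂ q) {a b δ₁ δ₂ δ : ℝ} (ha : 0 < a) (hb : 0 < b)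
    (hδa : ω e + δ₁ = a * δ) (hδb : δ₂ = b * δ) (hwe : a ≤ ∑ q ∈ S e, g q)
    (hwin : ∀ i, S i ⊆ S e → a * ∑ q ∈ S i, g₁ q ≤ ∑ q ∈ S i, g q)
    (hwout : ∀ i, Disjoint (S i) (S e) → b * ∑ q ∈ S i, g₂ q ≤ ∑ q ∈ S i, g q)
    (hC₁ : IsChainBounded S ω ((F.filter (S · ⊆ S e)).erase e) δ₁ g₁)
    (hC₂ : IsChainBounded S ω (F.filter (¬ S · ⊆ S e)) δ₂ g₂) :
    IsChainBounded S ω F δ g := by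
  intro C hCF hC
  rcases forall_subset_or_forall_disjoint_of_isChain hC (fun i hi => hS i (hCF hi))
    (fun i hi => hsplit i (hCF hi)) with hin | hout
  · have hC₁' : C.erase e ⊆ (F.filter (S · ⊆ S e)).erase e := fun i hi =>
      erase_subset_erase e (filter_subset_filter _ hCF) (mem_erase.2 ⟨(mem_erase.1 hi).1,
        mem_filter.2 ⟨mem_of_mem_erase hi, hin i (mem_of_mem_erase hi)⟩⟩)
    calc ∑ i ∈ C, ω i / ∑ q ∈ S i, g q
        ≤ ∑ i ∈ insert e (C.erase e), ω i / ∑ q ∈ S i, g q :=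
          sum_le_sum_of_subset_of_nonneg (insert_erase_subset e C) fun i hi _ =>
            div_nonneg (hω i (insert_subset he ((erase_subset e C).trans hCF) hi))
              (sum_nonneg fun q _ => (hg q).le)
      _ ≤ ω e / a + (∑ i ∈ C.erase e, ω i / ∑ q ∈ S i, g₁ q) / a := by
          rw [sum_insert (notMem_erase e C)]
          gcongr
          · exact hω e he
          · exact sum_div_le_sum_div_div ha (fun i hi => hω i (hCF (mem_of_mem_erase hi)))
              (fun i hi => sum_pos (fun q _ => hg₁ q) (hS i (hCF (mem_of_mem_erase hi))))
              fun i hi => hwin i (hin i (mem_of_mem_erase hi))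
      _ ≤ ω e / a + δ₁ / a := by gcongr; exact hC₁ _ hC₁' (hC.mono (by simp))
      _ = δ := by rw [← add_div, hδa, mul_div_cancel_left₀ _ ha.ne']
  · have hC₂' : C ⊆ F.filter (¬ S · ⊆ S e) := fun i hi => mem_filter.2 ⟨hCF hi, fun hsub =>
      (hS i (hCF hi)).ne_empty (disjoint_self.1 ((hout i hi).mono_right hsub))⟩
    calc ∑ i ∈ C, ω i / ∑ q ∈ S i, g q ≤ (∑ i ∈ C, ω i / ∑ q ∈ S i, g₂ q) / b :=
          sum_div_le_sum_div_div hb (fun i hi => hω i (hCF hi))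
            (fun i hi => sum_pos (fun q _ => hg₂ q) (hS i (hCF hi)))
            fun i hi => hwout i (hout i hi)
      _ ≤ δ₂ / b := by gcongr; exact hC₂ C hC₂' hC
      _ = δ := by rw [hδb, mul_div_cancel_left₀ _ hb.ne']

variable [Fintype α]

theorem exists_isChainBounded_empty (S : ι → Finset α) (ω : ι → ℝ) {δ : ℝ} (hδ : 0 ≤ δ) :
    ∃ g : α → ℝ, (∀ q, 0 < g q) ∧ ∑ q, g q ≤ 1 ∧ IsChainBounded S ω ∅ δ g := by
  refine ⟨fun _ => 1 / (Fintype.card α + 1), fun _ => by positivity, ?_, ?_⟩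
  · rw [sum_const, card_univ, nsmul_eq_mul, mul_one_div, div_le_one (by positivity)]
    linarith
  · intro C hC _
    rwa [subset_empty.1 hC, sum_empty]

/-- The gaps under `e` get the lengths of `g₁` rescaled to total `a`, the others those of
`g₂` scaled by `b`, where `a : b = (ω e + δ₁) : δ₂` and `a + b = 1`. -/
theorem exists_isChainBounded_of_split [DecidableEq ι] [DecidableEq α] {S : ι → Finset α}
    {ω : ι → ℝ} {F : Finset ι} {e : ι} (he : e ∈ F)
    (hsplit : ∀ j ∈ F, S j ⊆ S e ∨ Disjoint (S j) (S e)) (hS : ∀ i ∈ F, (S i).Nonempty)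
    (hω : ∀ i ∈ F, 0 ≤ ω i) {δ₁ δ₂ δ : ℝ} (hδ₁ : 0 < δ₁) (hδ₂ : 0 < δ₂)
    (hδ : ω e + δ₁ + δ₂ = δ) {g₁ g₂ : α → ℝ} (hg₁ : ∀ q, 0 < g₁ q) (hg₁1 : ∑ q, g₁ q ≤ 1)
    (hC₁ : IsChainBounded S ω ((F.filter (S · ⊆ S e)).erase e) δ₁ g₁)
    (hg₂ : ∀ q, 0 < g₂ q) (hg₂1 : ∑ q, g₂ q ≤ 1)
    (hC₂ : IsChainBounded S ω (F.filter (¬ S · ⊆ S e)) δ₂ g₂) :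
    ∃ g : α → ℝ, (∀ q, 0 < g q) ∧ ∑ q, g q ≤ 1 ∧ IsChainBounded S ω F δ g := by
  have he₁ : 0 < ω e + δ₁ := by linarith [hω e he]
  have hδ0 : 0 < δ := by linarith
  set a := (ω e + δ₁) / δ
  set b := δ₂ / δ
  have ha : 0 < a := div_pos he₁ hδ0
  have hb : 0 < b := div_pos hδ₂ hδ0
  set s := ∑ q ∈ S e, g₁ q
  have hs0 : 0 < s := sum_pos (fun q _ => hg₁ q) (hS e he)
  have hs1 : s ≤ 1 := (sum_le_univ_sum_of_nonneg fun q => (hg₁ q).le).trans hg₁1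
  set g := (S e).piecewise (fun q => a / s * g₁ q) (fun q => b * g₂ q)
  have hg : ∀ q, 0 < g q := fun q => by
    by_cases hq : q ∈ S e
    · simp only [g, piecewise_eq_of_mem _ _ _ hq]; exact mul_pos (div_pos ha hs0) (hg₁ q)
    · simp only [g, piecewise_eq_of_notMem _ _ _ hq]; exact mul_pos hb (hg₂ q)
  have width_in : ∀ {T}, T ⊆ S e → ∑ q ∈ T, g q = a / s * ∑ q ∈ T, g₁ q := fun hT => by
    rw [mul_sum]; exact sum_congr rfl fun q hq => piecewise_eq_of_mem _ _ _ (hT hq)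
  have width_out : ∀ {T}, Disjoint T (S e) → ∑ q ∈ T, g q = b * ∑ q ∈ T, g₂ q := fun hT => by
    rw [mul_sum]
    exact sum_congr rfl fun q hq => piecewise_eq_of_notMem _ _ _ (disjoint_left.1 hT hq)
  have hwe : ∑ q ∈ S e, g q = a := by rw [width_in subset_rfl, div_mul_cancel₀ _ hs0.ne']
  refine ⟨g, hg, ?_, isChainBounded_of_split he hsplit hS hω hg hg₁ hg₂ ha hb
    (by simp only [a]; field_simp) (by simp only [b]; field_simp) hwe.ge
    (fun i hi => ?_) (fun i hi => (width_out hi).ge) hC₁ hC₂⟩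
  · rw [← sum_compl_add_sum (S e), hwe, width_out disjoint_compl_left]
    calc b * ∑ q ∈ (S e)ᶜ, g₂ q + a ≤ b * 1 + a := by
          gcongr; exact (sum_le_univ_sum_of_nonneg fun q => (hg₂ q).le).trans hg₂1
      _ = 1 := by simp only [a, b]; field_simp; linarith
  · rw [width_in hi]
    gcongr
    · exact sum_nonneg fun q _ => (hg₁ q).le
    · exact le_div_self ha.le hs0 hs1

theorem IsLaminar.exists_isChainBounded {S : ι → Finset α} {ω : ι → ℝ} {F : Finset ι}
    (hF : IsLaminar S F) (hS : ∀ i ∈ F, (S i).Nonempty) (hω : ∀ i ∈ F, 0 ≤ ω i) {δ : ℝ}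
    (hδ : ∑ i ∈ F, ω i < δ) :
    ∃ g : α → ℝ, (∀ q, 0 < g q) ∧ ∑ q, g q ≤ 1 ∧ IsChainBounded S ω F δ g := by
  classical
  induction F using Finset.strongInduction generalizing δ with | H F ih => ?_
  rcases F.eq_empty_or_nonempty with rfl | hne
  · exact exists_isChainBounded_empty S ω (by simpa using hδ.le)
  obtain ⟨e, he, hmax⟩ := F.exists_max_image (fun i => (S i).card) hne
  have hsplit : ∀ j ∈ F, S j ⊆ S e ∨ Disjoint (S j) (S e) := fun j hj => by
    rcases hF j hj e he with h | h | h
    · exact .inl h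
    · exact .inl (eq_of_subset_of_card_le h (hmax j hj)).ge
    · exact .inr h
  have heF₁ : e ∈ F.filter (S · ⊆ S e) := mem_filter.2 ⟨he, subset_rfl⟩
  set F₁ := (F.filter (S · ⊆ S e)).erase e
  set F₂ := F.filter (¬ S · ⊆ S e)
  have hF₁ : F₁ ⊂ F := (erase_ssubset heF₁).trans_subset (filter_subset _ _)
  have hF₂ : F₂ ⊂ F :=
    ssubset_iff_of_subset (filter_subset _ _) |>.2 ⟨e, he, fun h => (mem_filter.1 h).2 subset_rfl⟩
  have hsum : ∑ i ∈ F, ω i = ω e + ∑ i ∈ F₁, ω i + ∑ i ∈ F₂, ω i := by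
    rw [← sum_filter_add_sum_filter_not F (S · ⊆ S e), ← add_sum_erase _ _ heF₁]
  set η := (δ - ∑ i ∈ F, ω i) / 2
  have hσ₁ : 0 ≤ ∑ i ∈ F₁, ω i := sum_nonneg fun i hi => hω i (hF₁.subset hi)
  have hσ₂ : 0 ≤ ∑ i ∈ F₂, ω i := sum_nonneg fun i hi => hω i (hF₂.subset hi)
  have hη : 0 < η := by simp only [η]; linarith
  obtain ⟨g₁, hg₁, hg₁1, hC₁⟩ := ih F₁ hF₁ (hF.subset hF₁.subset)
    (fun i hi => hS i (hF₁.subset hi)) (fun i hi => hω i (hF₁.subset hi))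
    (lt_add_of_pos_right _ hη)
  obtain ⟨g₂, hg₂, hg₂1, hC₂⟩ := ih F₂ hF₂ (hF.subset hF₂.subset)
    (fun i hi => hS i (hF₂.subset hi)) (fun i hi => hω i (hF₂.subset hi))
    (lt_add_of_pos_right _ hη)
  exact exists_isChainBounded_of_split he hsplit hS hω (by linarith) (by linarith)
    (by simp only [η]; linarith) hg₁ hg₁1 hC₁ hg₂ hg₂1 hC₂

end Laminar

section Stacking

variable {α : Type*}

/-- Rectangle `a` occupies the heights `[L a, Y a]` and rests on the highest rectangle
`r`-below it, or on the ground if there is none. -/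
structure IsStacking (r : α → α → Prop) (h Y L : α → ℝ≥0) : Prop where
  eq_add : ∀ a, Y a = h a + L a
  le_lower : ∀ a b, r b a → Y b ≤ L a
  lower_eq : ∀ a, (∃ b, r b a ∧ L a = Y b) ∨ ((¬ ∃ b, r b a) ∧ L a = 0)

variable {r : α → α → Prop}

theorem exists_isStacking [Fintype α] (hr : WellFounded r) (h : α → ℝ≥0) :
    ∃ Y L : α → ℝ≥0, IsStacking r h Y L := by
  classical
  obtain ⟨Y, hY⟩ : ∃ Y : α → ℝ≥0, ∀ a, Y a = h a + (univ.filter (r · a)).sup Y :=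
    ⟨hr.fix fun a Y' => h a + (univ.filter (r · a)).attach.sup fun b => Y' b (mem_filter.1 b.2).2,
      fun a => by rw [hr.fix_eq]; exact congrArg (h a + ·) (sup_attach _ _)⟩
  refine ⟨Y, fun a => (univ.filter (r · a)).sup Y,
    ⟨hY, fun a b hb => le_sup (by simpa using hb), fun a => ?_⟩⟩
  rcases (univ.filter (r · a)).eq_empty_or_nonempty with h0 | hne
  · exact .inr ⟨fun ⟨b, hb⟩ => filter_eq_empty_iff.1 h0 (mem_univ b) hb,
      by rw [h0, sup_empty]; rfl⟩
  · obtain ⟨b, hb, hbY⟩ := exists_mem_eq_sup _ hne Y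
    exact .inl ⟨b, (mem_filter.1 hb).2, hbY⟩

namespace IsStacking

theorem exists_isChain_sum_eq {h Y L : α → ℝ≥0} (hs : IsStacking r h Y L)
    (hr : WellFounded r) [IsTrans α r] (a : α) :
    ∃ C : Finset α, IsChain r (C : Set α) ∧ (∀ c ∈ C, c = a ∨ r c a) ∧
      Y a = ∑ c ∈ C, h c := by
  classical
  induction a using hr.induction with | _ a ih => ?_
  rcases hs.lower_eq a with ⟨b, hba, hL⟩ | ⟨-, hL⟩
  · obtain ⟨C, hC, hCb, hY⟩ := ih b hba
    have hCa : ∀ c ∈ C, r c a := fun c hc => (hCb c hc).elim (· ▸ hba) (_root_.trans · hba)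
    have haC : a ∉ C := fun ha => hr.irrefl.irrefl a (hCa a ha)
    refine ⟨insert a C, ?_, ?_, ?_⟩
    · rw [coe_insert]
      exact hC.insert fun c hc _ => .inr (hCa c hc)
    · simpa using fun c hc => .inr (hCa c hc)
    · rw [sum_insert haC, ← hY, ← hL, hs.eq_add]
  · exact ⟨{a}, by simp, by simp, by rw [hs.eq_add, hL, sum_singleton, add_zero]⟩

end IsStacking

end Stacking

section BookEmbedding

variable {V : Type*} {G : SimpleGraph V} {ω : V → V → ℝ} {f x : V → ℝ}

noncomputable def orient (x : V → ℝ) (F : V × V → ℝ) (u v : V) : ℝ :=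
  if x u < x v then F (u, v) else F (v, u)

theorem orient_of_lt {F : V × V → ℝ} {u v : V} (h : x u < x v) : orient x F u v = F (u, v) :=
  if_pos h

theorem orient_comm (hx : Function.Injective x) (F : V × V → ℝ) (u v : V) :
    orient x F u v = orient x F v u := by
  unfold orient
  rcases lt_trichotomy (x u) (x v) with h | h | h
  · rw [if_pos h, if_neg h.asymm]
  · rw [hx h]
  · rw [if_neg h.asymm, if_pos h]

theorem Wraps.lt {u v w z : V} (h : Wraps G x u v w z) : x w < x z := h.2.2.2.2.1

theorem Wraps.trans (hx : Function.Injective x) {u v w z a b : V} (h₁ : Wraps G x u v w z)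
    (h₂ : Wraps G x w z a b) : Wraps G x u v a b := by
  obtain ⟨huv, -, hne, h₁₁, h₁₂, h₁₃⟩ := h₁
  obtain ⟨-, hab, -, h₂₁, h₂₂, h₂₃⟩ := h₂
  refine ⟨huv, hab, fun heq => ?_, h₁₁.trans h₂₁, h₂₂, h₂₃.trans h₁₃⟩
  rcases Sym2.eq_iff.1 heq with ⟨rfl, rfl⟩ | ⟨rfl, rfl⟩
  · exact hne (by rw [hx (le_antisymm h₁₁ h₂₁), hx (le_antisymm h₂₃ h₁₃)])
  · linarith

theorem isTrans_wraps (hx : Function.Injective x) :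
    IsTrans (V × V) fun q p => Wraps G x p.1 p.2 q.1 q.2 :=
  ⟨fun _ _ _ h₁ h₂ => h₂.trans hx h₁⟩

theorem wellFounded_wraps [Finite V] (hx : Function.Injective x) :
    WellFounded fun q p : V × V => Wraps G x p.1 p.2 q.1 q.2 :=
  have := isTrans_wraps (G := G) hx
  have : Std.Irrefl fun q p : V × V => Wraps G x p.1 p.2 q.1 q.2 := ⟨fun _ h => h.2.2.1 rfl⟩
  Finite.wellFounded_of_trans_of_irrefl _

theorem IsBE.of_lt_iff (hf : IsBE G f) (hxf : ∀ a b, x a < x b ↔ f a < f b) : IsBE G x := by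
  refine ⟨fun a b hab => hf.1 (le_antisymm ?_ ?_), fun a b c d hab hcd => ?_⟩
  · exact not_lt.1 fun h => ((hxf b a).2 h).ne' hab
  · exact not_lt.1 fun h => ((hxf a b).2 h).ne hab
  · simpa only [hxf] using hf.2 a b c d hab hcd

theorem isTwoDimBE_of_isStacking (hx : IsBE G x) {h Y L : V × V → ℝ≥0}
    (hs : IsStacking (fun q p => Wraps G x p.1 p.2 q.1 q.2) h Y L)
    (harea : ∀ u v, G.Adj u v → x u < x v → (x v - x u) * h (u, v) = ω u v) :
    IsTwoDimBE G ω x (orient x fun p => L p) (orient x fun p => Y p) := by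
  refine ⟨hx, orient_comm hx.1 _, orient_comm hx.1 _, fun u v _ => ?_,
    fun u v huv hlt => ?_, fun u v _ hlt => ?_⟩
  · unfold orient; split_ifs <;> exact NNReal.coe_nonneg _
  · rw [orient_of_lt hlt, orient_of_lt hlt, hs.eq_add, NNReal.coe_add, add_sub_cancel_right,
      harea u v huv hlt]
  · simp only [orient_of_lt hlt]
    refine ⟨fun w z hw => ?_, ?_⟩
    · rw [orient_of_lt hw.lt]
      exact_mod_cast hs.le_lower (u, v) (w, z) hw
    · rcases hs.lower_eq (u, v) with ⟨⟨w, z⟩, hw, hL⟩ | ⟨hno, hL⟩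
      · exact .inl ⟨w, z, hw, by rw [orient_of_lt hw.lt, hL]⟩
      · exact .inr ⟨fun ⟨w, z, hw⟩ => hno ⟨(w, z), hw⟩, by rw [hL]; rfl⟩

theorem IsBE.nested_or_disjoint (hf : IsBE G f) {p q : V × V} (hp : G.Adj p.1 p.2)
    (hq : G.Adj q.1 q.2) :
    (f p.1 ≤ f q.1 ∧ f q.2 ≤ f p.2) ∨ (f q.1 ≤ f p.1 ∧ f p.2 ≤ f q.2) ∨
      f p.2 ≤ f q.1 ∨ f q.2 ≤ f p.1 := by
  have h₁ := hf.2 _ _ _ _ hp hq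
  have h₂ := hf.2 _ _ _ _ hq hp
  grind

variable [Fintype V]

/-- Gaps are indexed by their left endpoint: the gap following `v` has length `g v`, and
`gapSet f p` consists of the gaps spanned by `p`. -/
noncomputable def placement (f g : V → ℝ) (v : V) : ℝ :=
  ∑ q ∈ univ.filter (fun q => f q < f v), g q

noncomputable def gapSet (f : V → ℝ) (p : V × V) : Finset V :=
  univ.filter fun q => f p.1 ≤ f q ∧ f q < f p.2

open Classical in
noncomputable def risingEdges (G : SimpleGraph V) (f : V → ℝ) : Finset (V × V) :=
  univ.filter fun p => G.Adj p.1 p.2 ∧ f p.1 < f p.2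

theorem mem_risingEdges {p : V × V} : p ∈ risingEdges G f ↔ G.Adj p.1 p.2 ∧ f p.1 < f p.2 := by
  simp [risingEdges]

theorem totalWeight_eq_sum_risingEdges (G : SimpleGraph V) (ω : V → V → ℝ) (f : V → ℝ) :
    totalWeight G ω f = ∑ p ∈ risingEdges G f, ω p.1 p.2 := by
  rw [totalWeight, risingEdges, sum_filter]

theorem totalWeight_congr (hxf : ∀ a b, x a < x b ↔ f a < f b) :
    totalWeight G ω x = totalWeight G ω f := by
  unfold totalWeight
  congr! 3 with p
  exact hxf _ _

theorem gapSet_subset {p q : V × V} (h₁ : f p.1 ≤ f q.1) (h₂ : f q.2 ≤ f p.2) :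
    gapSet f q ⊆ gapSet f p := fun a ha => by
  simp only [gapSet, mem_filter, mem_univ, true_and] at ha ⊢
  exact ⟨h₁.trans ha.1, ha.2.trans_le h₂⟩

theorem disjoint_gapSet {p q : V × V} (h : f p.2 ≤ f q.1) : Disjoint (gapSet f p) (gapSet f q) :=
  disjoint_filter.2 fun _ _ ha hb => (ha.2.trans_le (h.trans hb.1)).false

theorem gapSet_nonempty {p : V × V} (h : f p.1 < f p.2) : (gapSet f p).Nonempty :=
  ⟨p.1, by simp [gapSet, h]⟩

theorem IsBE.isLaminar_gapSet (hf : IsBE G f) : IsLaminar (gapSet f) (risingEdges G f) := by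
  intro p hp q hq
  rcases hf.nested_or_disjoint (mem_risingEdges.1 hp).1 (mem_risingEdges.1 hq).1 with
    h | h | h | h
  · exact .inr (.inl (gapSet_subset h.1 h.2))
  · exact .inl (gapSet_subset h.1 h.2)
  · exact .inr (.inr (disjoint_gapSet h))
  · exact .inr (.inr (disjoint_gapSet h).symm)

theorem placement_sub_placement (g : V → ℝ) {u v : V} (h : f u ≤ f v) :
    placement f g v - placement f g u = ∑ q ∈ gapSet f (u, v), g q := by
  classical
  rw [sub_eq_iff_eq_add', placement, placement, gapSet, ← sum_union]
  · congr 1; ext q; simp only [mem_union, mem_filter, mem_univ, true_and]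
    constructor
    · intro hq; by_cases hqu : f q < f u <;> [exact .inl hqu; exact .inr ⟨not_lt.1 hqu, hq⟩]
    · rintro (hq | hq) <;> [exact hq.trans_le h; exact hq.2]
  · exact disjoint_filter.2 fun _ _ h₁ h₂ => (h₁.trans_le h₂.1).false

section Placement

variable {g : V → ℝ} (hg : ∀ q, 0 < g q)
include hg

theorem placement_nonneg (v : V) : 0 ≤ placement f g v :=
  sum_nonneg fun q _ => (hg q).le

theorem placement_le_sum (v : V) : placement f g v ≤ ∑ a, g a :=
  sum_le_univ_sum_of_nonneg fun q => (hg q).le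

theorem placement_lt_placement_iff {u v : V} :
    placement f g u < placement f g v ↔ f u < f v := by
  refine ⟨fun h => not_le.1 fun hvu => ?_, fun h => ?_⟩
  · linarith [placement_sub_placement g hvu,
      sum_nonneg fun q (_ : q ∈ gapSet f (v, u)) => (hg q).le]
  · linarith [placement_sub_placement g h.le,
      sum_pos (fun q _ => hg q) (gapSet_nonempty (p := (u, v)) h)]

theorem placement_le_placement_iff {u v : V} :
    placement f g u ≤ placement f g v ↔ f u ≤ f v := by
  simp only [← not_lt, placement_lt_placement_iff hg]

end Placement

theorem IsStacking.le_of_isChainBounded (hf : IsBE G f) {g : V → ℝ} (hg : ∀ q, 0 < g q)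
    {δ : ℝ} (hC : IsChainBounded (gapSet f) (fun p => ω p.1 p.2) (risingEdges G f) δ g)
    (hω : ∀ u v, G.Adj u v → 0 ≤ ω u v) {Y L : V × V → ℝ≥0}
    (hs : IsStacking (fun q p => Wraps G (placement f g) p.1 p.2 q.1 q.2)
      (fun p => (ω p.1 p.2 / (placement f g p.2 - placement f g p.1)).toNNReal) Y L)
    {p : V × V} (hp : p ∈ risingEdges G f) : (Y p : ℝ) ≤ δ := by
  have hx := (hf.of_lt_iff fun _ _ => placement_lt_placement_iff hg).1
  have := isTrans_wraps (G := G) hx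
  obtain ⟨C, hCr, hCp, hY⟩ := hs.exists_isChain_sum_eq (wellFounded_wraps hx) p
  have hCE : C ⊆ risingEdges G f := fun c hc => by
    rcases hCp c hc with rfl | hcp
    · exact hp
    · exact mem_risingEdges.2 ⟨hcp.2.1, (placement_lt_placement_iff hg).1 hcp.lt⟩
  calc (Y p : ℝ) = ∑ c ∈ C, ω c.1 c.2 / ∑ q ∈ gapSet f c, g q := by
        rw [hY, NNReal.coe_sum]
        refine sum_congr rfl fun c hc => ?_
        have hc' := mem_risingEdges.1 (hCE hc)
        rw [placement_sub_placement g hc'.2.le, Real.coe_toNNReal _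
          (div_nonneg (hω _ _ hc'.1) (sum_nonneg fun q _ => (hg q).le))]
    _ ≤ δ := hC C hCE <| hCr.mono_rel fun q p h =>
        gapSet_subset ((placement_le_placement_iff hg).1 h.2.2.2.1)
          ((placement_le_placement_iff hg).1 h.2.2.2.2.2)

end BookEmbedding

theorem twodim_embedding_small_area_general {V : Type*} [Fintype V]
    (G : SimpleGraph V) (ω : V → V → ℝ)
    (hpos : ∀ u v, G.Adj u v → 0 < ω u v)
    (ε : ℝ) (hε : 0 < ε)
    (houter : ∃ f : V → ℝ, IsBE G f) :
    ∃ (x : V → ℝ) (ylo yhi : V → V → ℝ),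
      IsTwoDimBE G ω x ylo yhi ∧
      ∃ X₁ X₂ Y₁ Y₂ : ℝ,
        (∀ u v : V, G.Adj u v → x u < x v →
          X₁ ≤ x u ∧ x v ≤ X₂ ∧ Y₁ ≤ ylo u v ∧ yhi u v ≤ Y₂) ∧
        (X₂ - X₁) * (Y₂ - Y₁) ≤ totalWeight G ω x + ε := by
  obtain ⟨f, hf⟩ := houter
  obtain ⟨g, hg, hg1, hC⟩ := hf.isLaminar_gapSet.exists_isChainBounded
    (fun p hp => gapSet_nonempty (mem_risingEdges.1 hp).2)
    (fun p hp => (hpos _ _ (mem_risingEdges.1 hp).1).le) (δ := totalWeight G ω f + ε)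
    (by rw [totalWeight_eq_sum_risingEdges]; linarith)
  set x := placement f g
  have hxf : ∀ a b, x a < x b ↔ f a < f b := fun _ _ => placement_lt_placement_iff hg
  have hx : IsBE G x := hf.of_lt_iff hxf
  obtain ⟨Y, L, hs⟩ := exists_isStacking (wellFounded_wraps (G := G) hx.1)
    fun p => (ω p.1 p.2 / (x p.2 - x p.1)).toNNReal
  refine ⟨x, orient x fun p => L p, orient x fun p => Y p,
    isTwoDimBE_of_isStacking hx hs fun u v huv hlt => ?_, 0, 1, 0, totalWeight G ω x + ε,
    fun u v huv hlt => ⟨placement_nonneg hg u, (placement_le_sum hg v).trans hg1,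
      by rw [orient_of_lt hlt]; exact NNReal.coe_nonneg _, ?_⟩, by simp⟩
  · rw [Real.coe_toNNReal _ (div_nonneg (hpos u v huv).le (sub_pos.2 hlt).le),
      mul_div_cancel₀ _ (sub_pos.2 hlt).ne']
  · rw [orient_of_lt hlt, totalWeight_congr hxf]
    exact hs.le_of_isChainBounded hf hg hC (fun u v h => (hpos u v h).le)
      (mem_risingEdges.2 ⟨huv, (hxf u v).1 hlt⟩)

/-- for every `ε > 0`, every weighted graph admitting a 1-page
book-embedding (i.e., every weighted outerplanar graph) admits a two-dimensional
book-embedding whose area is at most the total edge weight plus `ε`. -/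
theorem twodim_embedding_small_area {V : Type*} [Fintype V]
    (G : SimpleGraph V) (ω : V → V → ℝ)
    (hsym : ∀ u v, ω u v = ω v u)
    (hpos : ∀ u v, G.Adj u v → 0 < ω u v)
    (ε : ℝ) (hε : 0 < ε)
    (houter : ∃ f : V → ℝ, IsBE G f) :
    ∃ (x : V → ℝ) (ylo yhi : V → V → ℝ),
      IsTwoDimBE G ω x ylo yhi ∧
      ∃ X₁ X₂ Y₁ Y₂ : ℝ,
        (∀ u v : V, G.Adj u v → x u < x v →
          X₁ ≤ x u ∧ x v ≤ X₂ ∧ Y₁ ≤ ylo u v ∧ yhi u v ≤ Y₂) ∧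
        (X₂ - X₁) * (Y₂ - Y₁) ≤ totalWeight G ω x + ε :=
  twodim_embedding_small_area_general G ω hpos ε hε houter

end Schematic
end

section
/- Let G = (V,E,ω) be a connected weighted graph and let L be a minres-supporting 1-page book-embedding of G in which a given edge e* is not nested into any other edge of G. Let c ∈ V and let H ⊆ V with c ∈ H be such that H hangs from c and neither endpoint of e* lies in H∖{c}. Then c is visible in the restriction of L to H: there is no edge of G with both endpoints in H having one endpoint strictly before c and the other strictly after c in L. -/
namespace Schematic

open Classical in
/-- The burden of an edge `(u,v)` with `u ≺ v`: the number of vertices strictly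
between `u` and `v`. -/
noncomputable def burden {V : Type*} [Fintype V] (f : V → ℝ) (u v : V) : ℕ :=
  (Finset.univ.filter fun w : V => f u < f w ∧ f w < f v).card

/-- A minres-supporting book-embedding: a 1-page book-embedding in which the weight of
every edge is at least its burden plus one. -/
def IsMinresBE {V : Type*} [Fintype V] (G : SimpleGraph V) (ω : V → V → ℝ)
    (f : V → ℝ) : Prop :=
  IsBE G f ∧ ∀ u v : V, G.Adj u v → f u < f v → (burden f u v : ℝ) + 1 ≤ ω u v

/-- `H` hangs from `c`: `c ∈ H`, no edge of `G` joins a vertex of `H \ {c}` to a vertex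
outside `H`, and the subgraph induced by the complement of `H \ {c}` is connected. -/
def HangsFrom {V : Type*} (G : SimpleGraph V) (H : Set V) (c : V) : Prop :=
  c ∈ H ∧
  (∀ u v : V, G.Adj u v → u ∈ H \ {c} → v ∈ H) ∧
  (G.induce ((H \ {c})ᶜ)).Connected

/-- in a minres-supporting book-embedding in which the edge `(a,b)` is
not nested into any other edge, a vertex `c` from which a set `H` avoiding `(a,b)`
hangs is visible in the restriction to `H`. -/
theorem hanging_vertex_visible_minres {V : Type*} [Fintype V]
    (G : SimpleGraph V) (ω : V → V → ℝ)
    (hsym : ∀ u v, ω u v = ω v u)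
    (hpos : ∀ u v, G.Adj u v → 0 < ω u v)
    (hconn : G.Connected)
    (f : V → ℝ) (hf : IsMinresBE G ω f)
    (a b : V) (hab : G.Adj a b)
    (hnotnested : ¬ ∃ u v : V, Wraps G f u v a b ∨ Wraps G f u v b a)
    (c : V) (H : Set V) (hH : HangsFrom G H c)
    (ha : a ∉ H \ {c}) (hb : b ∉ H \ {c}) :
    ¬ ∃ u v : V, G.Adj u v ∧ u ∈ H ∧ v ∈ H ∧ f u < f c ∧ f c < f v := by
  rintro ⟨u, v, huv, huH, hvH, h1, h2⟩
  obtain ⟨⟨finj, hcross⟩, -⟩ := hf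
  obtain ⟨hcH, hedge, hconn'⟩ := hH
  have huc : u ≠ c := fun h => by subst h; exact lt_irrefl _ h1
  have hvc : v ≠ c := fun h => by subst h; exact lt_irrefl _ h2
  have huHc : u ∈ H \ {c} := ⟨huH, huc⟩
  have hvHc : v ∈ H \ {c} := ⟨hvH, hvc⟩
  have hcC : c ∈ ((H \ {c})ᶜ : Set V) := by simp
  have haC : a ∈ ((H \ {c})ᶜ : Set V) := ha
  have hbC : b ∈ ((H \ {c})ᶜ : Set V) := hb
  -- any neighbor (in the induced complement graph) of a vertex strictly inside
  -- the interval (f u, f v) is again strictly inside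
  have key : ∀ x y : ((H \ {c})ᶜ : Set V), (G.induce ((H \ {c})ᶜ)).Adj x y →
      f u < f x.1 ∧ f x.1 < f v → f u < f y.1 ∧ f y.1 < f v := by
    rintro ⟨x, hx⟩ ⟨y, hy⟩ hadj ⟨hx1, hx2⟩
    have hxy : G.Adj x y := hadj
    have hyu : y ≠ u := fun h => hy (h ▸ huHc)
    have hyv : y ≠ v := fun h => hy (h ▸ hvHc)
    have hfyu : f y ≠ f u := fun h => hyu (finj h)
    have hfyv : f y ≠ f v := fun h => hyv (finj h)
    constructor
    · rcases lt_trichotomy (f y) (f u) with h | h | h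
      · exact absurd ⟨h, hx1, hx2⟩ (hcross y x u v hxy.symm huv)
      · exact absurd h hfyu
      · exact h
    · rcases lt_trichotomy (f y) (f v) with h | h | h
      · exact h
      · exact absurd h hfyv
      · exact absurd ⟨hx1, hx2, h⟩ (hcross u v x y huv hxy)
  have step : ∀ p q : ((H \ {c})ᶜ : Set V), (G.induce ((H \ {c})ᶜ)).Walk p q →
      f u < f p.1 ∧ f p.1 < f v → f u < f q.1 ∧ f q.1 < f v := by
    intro p q w
    induction w with
    | nil => exact id
    | cons h w ih => intro hp; exact ih (key _ _ h hp)
  have Pa : f u < f a ∧ f a < f v := by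
    obtain ⟨w⟩ := hconn'.preconnected ⟨c, hcC⟩ ⟨a, haC⟩
    exact step _ _ w ⟨h1, h2⟩
  have Pb : f u < f b ∧ f b < f v := by
    obtain ⟨w⟩ := hconn'.preconnected ⟨c, hcC⟩ ⟨b, hbC⟩
    exact step _ _ w ⟨h1, h2⟩
  have hne : s(u, v) ≠ s(a, b) := by
    intro heq
    rw [Sym2.eq_iff] at heq
    obtain (⟨rfl, rfl⟩ | ⟨rfl, rfl⟩) := heq
    · exact ha huHc
    · exact hb huHc
  have hne' : s(u, v) ≠ s(b, a) := by
    intro heq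
    rw [Sym2.eq_iff] at heq
    obtain (⟨rfl, rfl⟩ | ⟨rfl, rfl⟩) := heq
    · exact hb huHc
    · exact ha huHc
  have hfab : f a ≠ f b := fun h => hab.ne (finj h)
  apply hnotnested
  rcases lt_trichotomy (f a) (f b) with h | h | h
  · exact ⟨u, v, Or.inl ⟨huv, hab, hne, Pa.1.le, h, Pb.2.le⟩⟩
  · exact absurd h hfab
  · exact ⟨u, v, Or.inr ⟨huv, hab.symm, hne', Pb.1.le, h, Pa.2.le⟩⟩

end Schematic
end

section
/- Let G = (V,E,ω) be a connected weighted graph and let L be a minres-supporting 1-page book-embedding of G in which a given edge e* is not nested into any other edge of G. Let c ∈ V and let H ⊆ V with c ∈ H be such that H hangs from c, the subgraph of G induced by H∖{c} is connected, and neither endpoint of e* lies in H∖{c}. Then c is the first or the last vertex of H in L: either c ⪯_L w for every w ∈ H, or w ⪯_L c for every w ∈ H. -/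
namespace Schematic

private lemma cross_aux {V : Type*} {G : SimpleGraph V} {f : V → ℝ} {S : Set V} {t : ℝ}
    (ht : ∀ z ∈ S, f z ≠ t) :
    ∀ {u v : ↥S} (_ : (G.induce S).Walk u v), f u.1 < t → t < f v.1 →
      ∃ x ∈ S, ∃ y ∈ S, G.Adj x y ∧ f x < t ∧ t < f y := by
  intro u v w
  induction w with
  | nil => intro h1 h2; exact absurd (h1.trans h2) (lt_irrefl _)
  | @cons u b v hadj p ih =>
    intro h1 h2
    have hadj' : G.Adj u.1 b.1 := hadj
    have hb : f b.1 ≠ t := ht b.1 b.2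
    rcases hb.lt_or_gt with hlt | hgt
    · exact ih hlt h2
    · exact ⟨u.1, u.2, b.1, b.2, hadj', h1, hgt⟩

private lemma interval_aux {V : Type*} {G : SimpleGraph V} {f : V → ℝ}
    (hinj : Function.Injective f)
    (hcross : ∀ a b c d : V, G.Adj a b → G.Adj c d → ¬ (f a < f c ∧ f c < f b ∧ f b < f d))
    {S : Set V} {x y : V} (hx : x ∉ S) (hy : y ∉ S) (hxy : G.Adj x y) :
    ∀ {u v : ↥S} (_ : (G.induce S).Walk u v),
      f x < f u.1 → f u.1 < f y → f x < f v.1 ∧ f v.1 < f y := by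
  intro u v w
  induction w with
  | nil => intro h1 h2; exact ⟨h1, h2⟩
  | @cons u b v hadj p ih =>
    intro h1 h2
    have hadj' : G.Adj u.1 b.1 := hadj
    have hbx : f b.1 ≠ f x := fun h => hx (by rw [← hinj h]; exact b.2)
    have hby : f b.1 ≠ f y := fun h => hy (by rw [← hinj h]; exact b.2)
    have hb1 : f x < f b.1 := by
      rcases hbx.lt_or_gt with hlt | hgt
      · exact absurd ⟨hlt, h1, h2⟩ (hcross b.1 u.1 x y hadj'.symm hxy)
      · exact hgt
    have hb2 : f b.1 < f y := by
      rcases hby.lt_or_gt with hlt | hgt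
      · exact hlt
      · exact absurd ⟨h1, h2, hgt⟩ (hcross x y u.1 b.1 hxy hadj')
    exact ih hb1 hb2

/-- extreme-parent property, minres version. -/
theorem extreme_parent_minres {V : Type*} [Fintype V]
    (G : SimpleGraph V) (ω : V → V → ℝ)
    (hsym : ∀ u v, ω u v = ω v u)
    (hpos : ∀ u v, G.Adj u v → 0 < ω u v)
    (hconn : G.Connected)
    (f : V → ℝ) (hf : IsMinresBE G ω f)
    (a b : V) (hab : G.Adj a b)
    (hnotnested : ¬ ∃ u v : V, Wraps G f u v a b ∨ Wraps G f u v b a)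
    (c : V) (H : Set V) (hH : HangsFrom G H c)
    (hHconn : (G.induce (H \ {c})).Connected)
    (ha : a ∉ H \ {c}) (hb : b ∉ H \ {c}) :
    (∀ w ∈ H, f c ≤ f w) ∨ (∀ w ∈ H, f w ≤ f c) := by
  obtain ⟨⟨hinj, hcross⟩, -⟩ := hf
  by_contra hcon
  push_neg at hcon
  obtain ⟨⟨u, hu, huc⟩, v, hv, hvc⟩ := hcon
  have hune : u ≠ c := fun h => by subst h; exact lt_irrefl _ huc
  have hvne : v ≠ c := fun h => by subst h; exact lt_irrefl _ hvc
  have hu' : u ∈ H \ {c} := ⟨hu, hune⟩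
  have hv' : v ∈ H \ {c} := ⟨hv, hvne⟩
  obtain ⟨w⟩ := hHconn.preconnected ⟨u, hu'⟩ ⟨v, hv'⟩
  have ht : ∀ z ∈ H \ {c}, f z ≠ f c := fun z hz h => hz.2 (hinj h)
  obtain ⟨x, hxS, y, hyS, hxy, hxc, hcy⟩ := cross_aux ht w huc hvc
  have hcT : c ∈ (H \ {c})ᶜ := fun hc => hc.2 rfl
  have hxT : x ∉ (H \ {c})ᶜ := fun h => h hxS
  have hyT : y ∉ (H \ {c})ᶜ := fun h => h hyS
  obtain ⟨wa⟩ := hH.2.2.preconnected ⟨c, hcT⟩ ⟨a, ha⟩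
  obtain ⟨wb⟩ := hH.2.2.preconnected ⟨c, hcT⟩ ⟨b, hb⟩
  obtain ⟨ha1, ha2⟩ := interval_aux hinj hcross hxT hyT hxy wa hxc hcy
  obtain ⟨hb1, hb2⟩ := interval_aux hinj hcross hxT hyT hxy wb hxc hcy
  have hne : f a ≠ f b := fun h => hab.ne (hinj h)
  rcases hne.lt_or_gt with hlt | hgt
  · refine hnotnested ⟨x, y, Or.inl ⟨hxy, hab, ?_, ha1.le, hlt, hb2.le⟩⟩
    intro h
    rw [Sym2.eq_iff] at h
    rcases h with ⟨h1, -⟩ | ⟨h1, -⟩ <;> subst h1 <;> linarith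
  · refine hnotnested ⟨x, y, Or.inr ⟨hxy, hab.symm, ?_, hb1.le, hgt, ha2.le⟩⟩
    intro h
    rw [Sym2.eq_iff] at h
    rcases h with ⟨h1, -⟩ | ⟨h1, -⟩ <;> subst h1 <;> linarith

end Schematic
end
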